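/- arXiv:2405.04730 — 5 statements merged into one kernel-verified Lean document; each statement's English description precedes it below -/
import Mathlib

section
/- Let v be a C² function on an interval [s₀, s₁] satisfying v''(s) + c²(1 + q(s)) v(s) = f(s), where c > 0, q is a C¹ function with |q(s)| ≤ 1/2 on [s₀,s₁], and f is continuous. Then there is a universal constant C such that for all s ∈ [s₀,s₁]: |v'(s)| + c|v(s)| ≤ C(1+c)(1+c^{-1}) ( |v'(s₀)| + c|v(s₀)| ) + C(1+c) c^{-1} ∫_{s₀}^{s} ( |f(σ)| + |q'(σ) v'(σ)| ) dσ. -/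
open Set MeasureTheory

/-! With `p = c²(1 + q)`, the energy `E = v'²/p + v²` satisfies `E' = 2v'f/p - v'²p'/p²`: the
oscillatory terms cancel. Since `c²/2 ≤ p ≤ 3c²/2`, this gives `(√E)' ≤ (√2/c)(|f| + |q'v'|)`,
and `√E` is comparable to `(|v'| + c|v|)/c` at both ends, which yields the estimate
with `C = 2√2`. -/

theorem Real.sqrt_add_sq_le_sqrt_add (x δ : ℝ) (hx : 0 ≤ x) (hδ : 0 ≤ δ) : √(x + δ ^ 2) ≤ √x + δ :=
  (Real.sqrt_le_left (by positivity)).2 <| by nlinarith [Real.sq_sqrt hx, Real.sqrt_nonneg x]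

theorem sqrt_le_sqrt_add_integral_of_deriv_le {E E' g : ℝ → ℝ} {a b : ℝ} (hab : a ≤ b)
    (hE : ContinuousOn E (Icc a b)) (hE' : ∀ x ∈ Ioo a b, HasDerivAt E (E' x) x)
    (hE0 : ∀ x ∈ Icc a b, 0 ≤ E x) (hg : IntegrableOn g (Icc a b))
    (hg0 : ∀ x ∈ Ioo a b, 0 ≤ g x) (hE'g : ∀ x ∈ Ioo a b, E' x ≤ 2 * g x * √(E x)) :
    √(E b) ≤ √(E a) + ∫ x in a..b, g x := by
  have hEa := hE0 a (left_mem_Icc.2 hab)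
  -- `√E` need not be differentiable where `E` vanishes, so we work with `√(E + δ²)`.
  refine le_of_forall_pos_le_add fun δ hδ => ?_
  have hpos : ∀ x ∈ Icc a b, 0 < E x + δ ^ 2 := fun x hx => by linarith [hE0 x hx, pow_pos hδ 2]
  have key : √(E b + δ ^ 2) - √(E a + δ ^ 2) ≤ ∫ x in a..b, g x := by
    refine intervalIntegral.sub_le_integral_of_hasDeriv_right_of_le hab
      ((hE.add continuousOn_const).sqrt) (fun x hx => (((hE' x hx).add_const _).sqrt
        (hpos x (Ioo_subset_Icc_self hx)).ne').hasDerivWithinAt) hg fun x hx => ?_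
    have hx' := Ioo_subset_Icc_self hx
    have hsqrt : √(E x) ≤ √(E x + δ ^ 2) := Real.sqrt_le_sqrt (by nlinarith)
    rw [div_le_iff₀ (by have := Real.sqrt_pos.2 (hpos x hx'); positivity)]
    nlinarith [hE'g x hx, mul_le_mul_of_nonneg_left hsqrt (hg0 x hx)]
  calc √(E b) ≤ √(E b + δ ^ 2) := Real.sqrt_le_sqrt (by nlinarith)
    _ ≤ √(E a + δ ^ 2) + ∫ x in a..b, g x := by linarith
    _ ≤ _ := by linarith [Real.sqrt_add_sq_le_sqrt_add (E a) δ hEa hδ.le]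

noncomputable def oscillatorEnergy (p v v' : ℝ → ℝ) (x : ℝ) : ℝ := v' x ^ 2 / p x + v x ^ 2

theorem hasDerivAt_oscillatorEnergy {p p' v v' v'' f : ℝ → ℝ} {x : ℝ}
    (hv : HasDerivAt v (v' x) x) (hv' : HasDerivAt v' (v'' x) x) (hp : HasDerivAt p (p' x) x)
    (hpx : p x ≠ 0) (hode : v'' x + p x * v x = f x) :
    HasDerivAt (oscillatorEnergy p v v')
      (2 * v' x * f x / p x - v' x ^ 2 * p' x / p x ^ 2) x := by
  refine (((hv'.pow 2).div hp hpx).add (hv.pow 2)).congr_deriv ?_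
  rw [← hode]
  simp only [Pi.pow_apply]
  field_simp
  ring

theorem deriv_oscillatorEnergy_le {c P a b F Q : ℝ} (hc : 0 < c) (hP : 0 < P)
    (hcP : c ^ 2 ≤ 2 * P) :
    2 * a * F / P - a ^ 2 * (c ^ 2 * Q) / P ^ 2 ≤
      2 * (√2 / c * (|F| + |Q * a|)) * √(a ^ 2 / P + b ^ 2) := by
  obtain ⟨m, hm, rfl⟩ : ∃ m, 0 < m ∧ P = m ^ 2 :=
    ⟨√P, Real.sqrt_pos.2 hP, (Real.sq_sqrt hP.le).symm⟩
  set e := √(a ^ 2 / m ^ 2 + b ^ 2)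
  set u := a / m
  have hu : |u| ≤ e := Real.abs_le_sqrt (by rw [div_pow]; nlinarith [sq_nonneg b])
  have hinv : 1 / m ≤ √2 / c := by
    rw [div_le_div_iff₀ hm hc, one_mul]
    calc c = √(c ^ 2) := (Real.sqrt_sq hc.le).symm
      _ ≤ √(2 * m ^ 2) := Real.sqrt_le_sqrt hcP
      _ = √2 * m := by rw [Real.sqrt_mul zero_le_two, Real.sqrt_sq hm.le]
  have hcP' : c ^ 2 / m ^ 2 ≤ 2 := (div_le_iff₀ (by positivity)).2 hcP
  have hF : u * F ≤ e * |F| :=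
    (le_abs_self _).trans (by rw [abs_mul]; gcongr)
  have hQ : -(u * (Q * a)) * (c ^ 2 / m ^ 2) ≤ e * |Q * a| * 2 := by
    have : -(u * (Q * a)) ≤ e * |Q * a| := (neg_le_abs _).trans (by rw [abs_mul]; gcongr)
    calc -(u * (Q * a)) * (c ^ 2 / m ^ 2) ≤ e * |Q * a| * (c ^ 2 / m ^ 2) := by gcongr
      _ ≤ e * |Q * a| * 2 := by
        have := (abs_nonneg u).trans hu
        gcongr
  calc 2 * a * F / m ^ 2 - a ^ 2 * (c ^ 2 * Q) / (m ^ 2) ^ 2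
      = 1 / m * (2 * (u * F) - u * (Q * a) * (c ^ 2 / m ^ 2)) := by
        simp only [u]; field_simp
    _ ≤ 1 / m * (2 * (e * (|F| + |Q * a|))) := by gcongr; linarith
    _ ≤ √2 / c * (2 * (e * (|F| + |Q * a|))) := by
        have := (abs_nonneg u).trans hu
        gcongr
    _ = _ := by ring

theorem abs_add_mul_abs_le_two_mul_sqrt {a b c P : ℝ} (hc : 0 < c) (hP : 0 < P)
    (hPc : P ≤ 3 * c ^ 2) : |a| + c * |b| ≤ 2 * c * √(a ^ 2 / P + b ^ 2) := by
  have ha : a ^ 2 = a ^ 2 / P * P := (div_mul_cancel₀ _ hP.ne').symm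
  have hx : 0 ≤ a ^ 2 / P := by positivity
  calc |a| + c * |b| ≤ √((2 * c) ^ 2 * (a ^ 2 / P + b ^ 2)) :=
        Real.le_sqrt_of_sq_le <| by
          nlinarith [sq_abs a, sq_abs b, sq_nonneg (|a| - 3 * c * |b|),
            mul_le_mul_of_nonneg_left hPc hx]
    _ = 2 * c * √(a ^ 2 / P + b ^ 2) := by
        rw [Real.sqrt_mul (by positivity), Real.sqrt_sq (by positivity)]

theorem sqrt_div_add_sq_le {a b c P : ℝ} (hc : 0 < c) (hP : 0 < P) (hcP : c ^ 2 ≤ 2 * P) :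
    √(a ^ 2 / P + b ^ 2) ≤ √2 / c * (|a| + c * |b|) := by
  rw [Real.sqrt_le_left (by positivity), mul_pow, div_pow, Real.sq_sqrt zero_le_two]
  have h1 : a ^ 2 / P ≤ 2 * a ^ 2 / c ^ 2 := by
    rw [div_le_div_iff₀ hP (by positivity)]; nlinarith [sq_nonneg a]
  have h2 : a ^ 2 + c ^ 2 * b ^ 2 ≤ (|a| + c * |b|) ^ 2 := by
    nlinarith [sq_abs a, sq_abs b, mul_nonneg hc.le (mul_nonneg (abs_nonneg a) (abs_nonneg b))]
  calc a ^ 2 / P + b ^ 2 ≤ 2 / c ^ 2 * (a ^ 2 + c ^ 2 * b ^ 2) := by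
        have : 2 / c ^ 2 * (a ^ 2 + c ^ 2 * b ^ 2) = 2 * a ^ 2 / c ^ 2 + 2 * b ^ 2 := by
          field_simp
        nlinarith [sq_nonneg b]
    _ ≤ 2 / c ^ 2 * (|a| + c * |b|) ^ 2 := by gcongr

theorem sqrt_oscillatorEnergy_le {s₀ s c : ℝ} {v v' v'' q q' f : ℝ → ℝ} (hs : s₀ ≤ s)
    (hc : 0 < c) (hv : ∀ x ∈ Icc s₀ s, HasDerivAt v (v' x) x)
    (hv' : ∀ x ∈ Icc s₀ s, HasDerivAt v' (v'' x) x) (hq : ∀ x ∈ Icc s₀ s, HasDerivAt q (q' x) x)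
    (hq' : ContinuousOn q' (Icc s₀ s)) (hq_ge : ∀ x ∈ Icc s₀ s, -(1 / 2) ≤ q x)
    (hf : ContinuousOn f (Icc s₀ s))
    (hode : ∀ x ∈ Icc s₀ s, v'' x + c ^ 2 * (1 + q x) * v x = f x) :
    √(oscillatorEnergy (fun x => c ^ 2 * (1 + q x)) v v' s) ≤
      √(oscillatorEnergy (fun x => c ^ 2 * (1 + q x)) v v' s₀) +
        √2 / c * ∫ x in s₀..s, (|f x| + |q' x * v' x|) := by
  set p : ℝ → ℝ := fun x => c ^ 2 * (1 + q x)
  have hcp : ∀ x ∈ Icc s₀ s, c ^ 2 ≤ 2 * p x := fun x hx => by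
    nlinarith [hq_ge x hx, sq_nonneg c]
  have hp : ∀ x ∈ Icc s₀ s, 0 < p x := fun x hx => by nlinarith [hcp x hx, pow_pos hc 2]
  have hE : ∀ x ∈ Icc s₀ s, HasDerivAt (oscillatorEnergy p v v')
      (2 * v' x * f x / p x - v' x ^ 2 * (c ^ 2 * q' x) / p x ^ 2) x := fun x hx =>
    hasDerivAt_oscillatorEnergy (p' := fun x => c ^ 2 * q' x) (hv x hx) (hv' x hx)
      (((hq x hx).const_add 1).const_mul _) (hp x hx).ne' (hode x hx)
  have hcont : ContinuousOn (fun x => |f x| + |q' x * v' x|) (Icc s₀ s) :=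
    hf.abs.add (hq'.mul fun x hx => (hv' x hx).continuousAt.continuousWithinAt).abs
  rw [← intervalIntegral.integral_const_mul]
  refine sqrt_le_sqrt_add_integral_of_deriv_le hs
    (fun x hx => (hE x hx).continuousAt.continuousWithinAt)
    (fun x hx => hE x (Ioo_subset_Icc_self hx))
    (fun x hx => by have := hp x hx; unfold oscillatorEnergy; positivity)
    (continuousOn_const.mul hcont).integrableOn_Icc (fun x _ => by positivity)
    fun x hx => deriv_oscillatorEnergy_le hc (hp x (Ioo_subset_Icc_self hx))
      (hcp x (Ioo_subset_Icc_self hx))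

/-- perturbed harmonic oscillator estimate. If `v'' + c²(1+q)v = f`
on `[s₀,s₁]` with `c > 0`, `|q| ≤ 1/2`, then for a universal constant `C`,
`|v'(s)| + c|v(s)| ≤ C(1+c)(1+c⁻¹)(|v'(s₀)| + c|v(s₀)|)
  + C(1+c)c⁻¹ ∫_{s₀}^s (|f| + |q' v'|)`. -/
theorem ode_oscillator_estimate :
    ∃ C : ℝ, 0 < C ∧
      ∀ (s₀ s₁ c : ℝ) (v v' v'' q q' f : ℝ → ℝ),
        s₀ ≤ s₁ → 0 < c →
        (∀ s ∈ Icc s₀ s₁, HasDerivAt v (v' s) s) →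
        (∀ s ∈ Icc s₀ s₁, HasDerivAt v' (v'' s) s) →
        ContinuousOn v'' (Icc s₀ s₁) →
        (∀ s ∈ Icc s₀ s₁, HasDerivAt q (q' s) s) →
        ContinuousOn q' (Icc s₀ s₁) →
        (∀ s ∈ Icc s₀ s₁, |q s| ≤ 1 / 2) →
        ContinuousOn f (Icc s₀ s₁) →
        (∀ s ∈ Icc s₀ s₁, v'' s + c ^ 2 * (1 + q s) * v s = f s) →
        ∀ s ∈ Icc s₀ s₁,
          |v' s| + c * |v s| ≤
            C * (1 + c) * (1 + c⁻¹) * (|v' s₀| + c * |v s₀|) +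
              C * (1 + c) * c⁻¹ * ∫ σ in s₀..s, (|f σ| + |q' σ * v' σ|) := by
  refine ⟨2 * √2, by positivity, ?_⟩
  intro s₀ s₁ c v v' v'' q q' f _ hc hv hv' _ hq hq' hq_abs hf hode s hs
  have hsub : Icc s₀ s ⊆ Icc s₀ s₁ := Icc_subset_Icc_right hs.2
  have hsqrtE := sqrt_oscillatorEnergy_le hs.1 hc (fun x hx => hv x (hsub hx))
    (fun x hx => hv' x (hsub hx)) (fun x hx => hq x (hsub hx)) (hq'.mono hsub)
    (fun x hx => (abs_le.1 (hq_abs x (hsub hx))).1) (hf.mono hsub)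
    (fun x hx => hode x (hsub hx))
  set p : ℝ → ℝ := fun x => c ^ 2 * (1 + q x)
  have hp : ∀ x ∈ Icc s₀ s₁, 0 < p x ∧ c ^ 2 ≤ 2 * p x ∧ p x ≤ 3 * c ^ 2 := fun x hx => by
    obtain ⟨hq₁, hq₂⟩ := abs_le.1 (hq_abs x hx)
    refine ⟨?_, ?_, ?_⟩ <;> nlinarith [pow_pos hc 2]
  set A := |v' s₀| + c * |v s₀|
  set B := ∫ σ in s₀..s, (|f σ| + |q' σ * v' σ|)
  have hB : 0 ≤ B := intervalIntegral.integral_nonneg hs.1 fun _ _ => by positivity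
  have hs₀ : s₀ ∈ Icc s₀ s₁ := left_mem_Icc.2 (hs.1.trans hs.2)
  calc |v' s| + c * |v s| ≤ 2 * c * √(oscillatorEnergy p v v' s) :=
        abs_add_mul_abs_le_two_mul_sqrt hc (hp s hs).1 (hp s hs).2.2
    _ ≤ 2 * c * (√2 / c * A + √2 / c * B) := by
        gcongr
        exact hsqrtE.trans
          (add_le_add (sqrt_div_add_sq_le hc (hp s₀ hs₀).1 (hp s₀ hs₀).2.1) le_rfl)
    _ = 2 * √2 * A + 2 * √2 * B := by field_simp
    _ ≤ 2 * √2 * (1 + c) * (1 + c⁻¹) * A + 2 * √2 * (1 + c) * c⁻¹ * B := by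
        have h1 : 1 ≤ (1 + c) * (1 + c⁻¹) := by nlinarith [inv_pos.2 hc, mul_inv_cancel₀ hc.ne']
        have h2 : 1 ≤ (1 + c) * c⁻¹ := by nlinarith [inv_pos.2 hc, mul_inv_cancel₀ hc.ne']
        have := Real.sqrt_nonneg 2
        have hA : 0 ≤ A := by positivity
        nlinarith [mul_le_mul_of_nonneg_left h1 (mul_nonneg this hA),
          mul_le_mul_of_nonneg_left h2 (mul_nonneg this hB)]
end

section
/- In ℝ^{1+n} with coordinates (t, x¹, …, xⁿ), for any C² function u the following pointwise identity holds: (K₁u + (n-1)u/2)·□u = (1/2) ∂_t( t Σ_{α=0}^n |∂_α u|² + 2 x^b ∂_b u ∂_t u + (n-1) u ∂_t u ) − (1/2) ∂_a( 2t ∂_t u ∂_a u + 2 x^b ∂_b u ∂_a u + x^a |∂_t u|² − x^a Σ_b |∂_b u|² + (n-1) u ∂_a u ), where K₁ = t∂_t + x^a ∂_a, □ = ∂_t² − Σ_a ∂_a², and repeated indices a, b ∈ {1,…,n} are summed. -/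
/-!
Multiplying `□u` by `2t ∂_t u`, by `2x^b ∂_b u` and by `c u` and applying the Leibniz rule
gives three divergence identities whose remainders are quadratic in `∂u`: `-|∂u|²`,
`n (∂_t u)² - (n - 2) |∇u|²` and `-c ((∂_t u)² - |∇u|²)`. For `c = n - 1` the three remainders
cancel, which is why `K₁` is corrected by `(n - 1) u / 2`. The only analytic input is the symmetry
of the second derivatives of a `C²` function.
-/

noncomputable section

/-- Partial derivative in the `i`-th coordinate direction on `ℝ^m`. -/
def pd {m : ℕ} (u : (Fin m → ℝ) → ℝ) (i : Fin m) (x : Fin m → ℝ) : ℝ :=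
  fderiv ℝ u x (Pi.single i 1)

/-- D'Alembert operator `□ = ∂_t² − Σ_a ∂_a²` on `ℝ^{1+n}` (index `0` is time). -/
def Box {n : ℕ} (u : (Fin (n + 1) → ℝ) → ℝ) (p : Fin (n + 1) → ℝ) : ℝ :=
  pd (pd u 0) 0 p - ∑ a : Fin n, pd (pd u a.succ) a.succ p

/-- Scaling field `K₁u = t ∂_t u + x^a ∂_a u`. -/
def K1 {n : ℕ} (u : (Fin (n + 1) → ℝ) → ℝ) (p : Fin (n + 1) → ℝ) : ℝ :=
  p 0 * pd u 0 p + ∑ a : Fin n, p a.succ * pd u a.succ p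

section Calculus

variable {m : ℕ} {f g : (Fin m → ℝ) → ℝ} {p : Fin m → ℝ}

theorem pd_add (hf : DifferentiableAt ℝ f p) (hg : DifferentiableAt ℝ g p) (i : Fin m) :
    pd (fun q => f q + g q) i p = pd f i p + pd g i p := by
  simp [pd, fderiv_fun_add hf hg]

theorem pd_sub (hf : DifferentiableAt ℝ f p) (hg : DifferentiableAt ℝ g p) (i : Fin m) :
    pd (fun q => f q - g q) i p = pd f i p - pd g i p := by
  simp [pd, fderiv_fun_sub hf hg]

theorem pd_mul (hf : DifferentiableAt ℝ f p) (hg : DifferentiableAt ℝ g p) (i : Fin m) :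
    pd (fun q => f q * g q) i p = f p * pd g i p + g p * pd f i p := by
  simp [pd, fderiv_fun_mul hf hg]

theorem pd_const (c : ℝ) (i : Fin m) : pd (fun _ => c) i p = 0 := by
  simp [pd]

theorem pd_pow (hf : DifferentiableAt ℝ f p) (k : ℕ) (i : Fin m) :
    pd (fun q => f q ^ k) i p = k * f p ^ (k - 1) * pd f i p := by
  simp [pd, fderiv_fun_pow k hf]

theorem pd_sum {ι : Type*} {s : Finset ι} {f : ι → (Fin m → ℝ) → ℝ}
    (hf : ∀ j ∈ s, DifferentiableAt ℝ (f j) p) (i : Fin m) :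
    pd (fun q => ∑ j ∈ s, f j q) i p = ∑ j ∈ s, pd (f j) i p := by
  simp [pd, fderiv_fun_sum hf]

theorem pd_apply (j i : Fin m) : pd (fun q => q j) i p = if i = j then 1 else 0 := by
  rw [pd, (hasFDerivAt_apply j p).fderiv]
  simp [Pi.single_apply, eq_comm]

theorem differentiable_pd (hf : ContDiff ℝ 2 f) (i : Fin m) : Differentiable ℝ (pd f i) :=
  ((hf.fderiv_right (m := 1) le_rfl).clm_apply contDiff_const).differentiable one_ne_zero

theorem pd_comm (hf : ContDiff ℝ 2 f) (i j : Fin m) (p : Fin m → ℝ) :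
    pd (pd f i) j p = pd (pd f j) i p := by
  have hd : DifferentiableAt ℝ (fderiv ℝ f) p :=
    ((hf.fderiv_right (m := 1) le_rfl).differentiable one_ne_zero) p
  have pd_pd_eq (v w : Fin m → ℝ) :
      fderiv ℝ (fun x => fderiv ℝ f x v) p w = fderiv ℝ (fderiv ℝ f) p w v := by
    simp [fderiv_clm_apply hd (differentiableAt_const v)]
  change fderiv ℝ (fun x => fderiv ℝ f x _) p _ = fderiv ℝ (fun x => fderiv ℝ f x _) p _
  rw [pd_pd_eq, pd_pd_eq]
  exact hf.contDiffAt.isSymmSndFDerivAt (by simp) _ _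

end Calculus

def spacetimeDiv {n : ℕ} (T : (Fin (n + 1) → ℝ) → ℝ) (S : Fin n → (Fin (n + 1) → ℝ) → ℝ)
    (p : Fin (n + 1) → ℝ) : ℝ :=
  pd T 0 p - ∑ a : Fin n, pd (S a) a.succ p

section Multipliers

variable {n : ℕ} {u : (Fin (n + 1) → ℝ) → ℝ}

theorem two_mul_time_mul_Box (hu : ContDiff ℝ 2 u) (p : Fin (n + 1) → ℝ) :
    2 * (p 0 * pd u 0 p) * Box u p =
      spacetimeDiv (fun q => q 0 * ∑ α, pd u α q ^ 2)
        (fun a q => 2 * q 0 * pd u 0 q * pd u a.succ q) p - ∑ α, pd u α p ^ 2 := by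
  have hu₁ : Differentiable ℝ u := hu.differentiable two_ne_zero
  have hdu := differentiable_pd hu
  simp (disch := (intros; fun_prop)) only [spacetimeDiv, pd_mul, pd_sum, pd_pow, pd_apply,
    pd_const, mul_zero, add_zero]
  simp only [Box, Fin.sum_univ_succ, fun b : Fin n => pd_comm hu b.succ 0,
    Fin.succ_ne_zero, if_true, if_false, Nat.add_one_sub_one, pow_one, Nat.cast_ofNat]
  simp only [mul_add, mul_zero, add_zero, mul_one, Finset.mul_sum, Finset.sum_add_distrib,
    mul_sub]
  ring_nf

theorem two_mul_radial_mul_Box (hu : ContDiff ℝ 2 u) (p : Fin (n + 1) → ℝ) :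
    2 * (∑ b : Fin n, p b.succ * pd u b.succ p) * Box u p =
      spacetimeDiv (fun q => 2 * (∑ b : Fin n, q b.succ * pd u b.succ q) * pd u 0 q)
        (fun a q => 2 * (∑ b : Fin n, q b.succ * pd u b.succ q) * pd u a.succ q +
          q a.succ * pd u 0 q ^ 2 - q a.succ * ∑ b : Fin n, pd u b.succ q ^ 2) p +
        n * pd u 0 p ^ 2 - (n - 2) * ∑ b : Fin n, pd u b.succ p ^ 2 := by
  have hu₁ : Differentiable ℝ u := hu.differentiable two_ne_zero
  have hdu := differentiable_pd hu
  have cross : ∑ a : Fin n, ∑ b : Fin n, pd u a.succ p * p b.succ * pd (pd u b.succ) a.succ p =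
      ∑ a : Fin n, ∑ b : Fin n, p a.succ * pd u b.succ p * pd (pd u b.succ) a.succ p := by
    rw [Finset.sum_comm]
    refine Finset.sum_congr rfl fun a _ => Finset.sum_congr rfl fun b _ => ?_
    rw [pd_comm hu a.succ b.succ]
    ring
  simp (disch := (intros; fun_prop)) only [spacetimeDiv, pd_add, pd_sub, pd_mul, pd_sum, pd_pow,
    pd_apply, pd_const, mul_zero, add_zero]
  simp only [Box, fun b : Fin n => pd_comm hu b.succ 0, if_true, Nat.add_one_sub_one, pow_one,
    Nat.cast_ofNat, Fin.succ_inj]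
  simp only [mul_add, mul_sub, mul_zero, mul_one, mul_ite, Finset.sum_ite_eq, Finset.mem_univ,
    if_true, if_false, Finset.mul_sum, Finset.sum_add_distrib, Finset.sum_sub_distrib,
    Finset.sum_const, Finset.card_univ, Fintype.card_fin, nsmul_eq_mul, (Fin.succ_ne_zero _).symm]
  ring_nf
  simp only [← Finset.sum_mul]
  rw [cross]
  simp only [Finset.sum_sub_distrib, ← Finset.mul_sum, ← Finset.sum_mul]
  ring

theorem const_mul_mul_Box (hu : ContDiff ℝ 2 u) (c : ℝ) (p : Fin (n + 1) → ℝ) :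
    c * u p * Box u p =
      spacetimeDiv (fun q => c * u q * pd u 0 q) (fun a q => c * u q * pd u a.succ q) p -
        c * (pd u 0 p ^ 2 - ∑ a : Fin n, pd u a.succ p ^ 2) := by
  have hu₁ : Differentiable ℝ u := hu.differentiable two_ne_zero
  have hdu := differentiable_pd hu
  simp (disch := fun_prop) only [spacetimeDiv, pd_mul, pd_const, mul_zero, add_zero]
  simp only [Box, mul_sub, Finset.mul_sum, Finset.sum_add_distrib]
  ring_nf

end Multipliers

theorem divergence_identity_conformal_general
    (n : ℕ) (u : (Fin (n + 1) → ℝ) → ℝ) (hu : ContDiff ℝ 2 u)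
    (p : Fin (n + 1) → ℝ) :
    (K1 u p + ((n : ℝ) - 1) * u p / 2) * Box u p =
      (1 / 2) * pd (fun q =>
          q 0 * ∑ α : Fin (n + 1), (pd u α q) ^ 2 +
            2 * (∑ b : Fin n, q b.succ * pd u b.succ q) * pd u 0 q +
            ((n : ℝ) - 1) * u q * pd u 0 q) 0 p -
      (1 / 2) * ∑ a : Fin n, pd (fun q =>
          2 * q 0 * pd u 0 q * pd u a.succ q +
            2 * (∑ b : Fin n, q b.succ * pd u b.succ q) * pd u a.succ q +
            q a.succ * (pd u 0 q) ^ 2 -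
            q a.succ * (∑ b : Fin n, (pd u b.succ q) ^ 2) +
            ((n : ℝ) - 1) * u q * pd u a.succ q) a.succ p := by
  have hu₁ : Differentiable ℝ u := hu.differentiable two_ne_zero
  have hdu := differentiable_pd hu
  have time := two_mul_time_mul_Box hu p
  have radial := two_mul_radial_mul_Box hu p
  have zeroth := const_mul_mul_Box hu ((n : ℝ) - 1) p
  rw [Fin.sum_univ_succ] at time
  -- by linearity both sides become sums of divergences of the same individual current terms
  simp (disch := fun_prop) only [spacetimeDiv, pd_add, pd_sub, Finset.sum_add_distrib,
    Finset.sum_sub_distrib] at time radial zeroth ⊢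
  rw [K1]
  linear_combination (time + radial + zeroth) / 2

/-- the pointwise divergence identity
`(K₁u + (n-1)u/2)·□u = (1/2)∂_t(...) − (1/2)∂_a(...)`. -/
theorem divergence_identity_conformal
    (n : ℕ) (hn : 1 ≤ n) (u : (Fin (n + 1) → ℝ) → ℝ) (hu : ContDiff ℝ 2 u)
    (p : Fin (n + 1) → ℝ) :
    (K1 u p + ((n : ℝ) - 1) * u p / 2) * Box u p =
      (1 / 2) * pd (fun q =>
          q 0 * ∑ α : Fin (n + 1), (pd u α q) ^ 2 +
            2 * (∑ b : Fin n, q b.succ * pd u b.succ q) * pd u 0 q +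
            ((n : ℝ) - 1) * u q * pd u 0 q) 0 p -
      (1 / 2) * ∑ a : Fin n, pd (fun q =>
          2 * q 0 * pd u 0 q * pd u a.succ q +
            2 * (∑ b : Fin n, q b.succ * pd u b.succ q) * pd u a.succ q +
            q a.succ * (pd u 0 q) ^ 2 -
            q a.succ * (∑ b : Fin n, (pd u b.succ q) ^ 2) +
            ((n : ℝ) - 1) * u q * pd u a.succ q) a.succ p :=
  divergence_identity_conformal_general n u hu p
end
end

section
/- For any C² function v defined in the cone {r < t} ⊂ ℝ^{1+3} and s = √(t²−r²), the following identity holds pointwise: ∂̄_s∂̄_s v + (2x^a/s) ∂̄_s ∂̄_a v + (3/s) ∂̄_s v = s^{-3/2} (∂̄_s + (x^a/s)∂̄_a)²(s^{3/2} v) − (x^a x^b/s²) ∂̄_a ∂̄_b v − (3x^a/s²) ∂̄_a v − (3/(4s²)) v, where ∂̄_s = (s/t)∂_t, ∂̄_a = (x^a/t)∂_t + ∂_a. -/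
/-!
In the cone, `L = ∂̄_s + (x^a/s)∂̄_a` is `s⁻¹` times the Euler field `t∂_t + x^a∂_a`, so it is a
derivation with `L s = 1` and `L (x^a/s) = 0`. The first gives
`s^{-k} L²(s^k v) = L²v + (2k/s) Lv + (k(k-1)/s²) v`; the second, together with
`[∂̄_s, ∂̄_a] = 0`, gives `L²v = ∂̄_s∂̄_s v + (2x^a/s) ∂̄_s∂̄_a v + (x^a x^b/s²) ∂̄_a∂̄_b v`.
Taking `k = 3/2` and `Lv = ∂̄_s v + (x^a/s)∂̄_a v` yields the identity.
-/

noncomputable section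

/-- `s = √(t² − |x|²)` on `ℝ^{1+3}` (index `0` is time). -/
def sfun (p : Fin 4 → ℝ) : ℝ :=
  Real.sqrt ((p 0) ^ 2 - ∑ a : Fin 3, (p a.succ) ^ 2)

/-- The frame field `∂̄_s = (s/t)∂_t` acting on functions of `(t,x)`. -/
def Ds (f : (Fin 4 → ℝ) → ℝ) (p : Fin 4 → ℝ) : ℝ :=
  (sfun p / p 0) * pd f 0 p

/-- The frame field `∂̄_a = (x^a/t)∂_t + ∂_a`. -/
def Da (a : Fin 3) (f : (Fin 4 → ℝ) → ℝ) (p : Fin 4 → ℝ) : ℝ :=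
  (p a.succ / p 0) * pd f 0 p + pd f a.succ p

/-- The field `L = ∂̄_s + (x^a/s)∂̄_a`. -/
def Lop (f : (Fin 4 → ℝ) → ℝ) (p : Fin 4 → ℝ) : ℝ :=
  Ds f p + ∑ a : Fin 3, (p a.succ / sfun p) * Da a f p

open Topology VectorField

theorem fderiv_div_apply {E : Type*} [NormedAddCommGroup E] [NormedSpace ℝ E] {f g : E → ℝ}
    {x : E} (hf : DifferentiableAt ℝ f x) (hg : DifferentiableAt ℝ g x) (hx : g x ≠ 0) (w : E) :
    fderiv ℝ (fun y => f y / g y) x w = (fderiv ℝ f x w * g x - f x * fderiv ℝ g x w) / g x ^ 2 := by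
  have hinv : HasFDerivAt (fun y => (g y)⁻¹) (-(g x ^ 2)⁻¹ • fderiv ℝ g x) x :=
    (hasDerivAt_inv hx).comp_hasFDerivAt x hg.hasFDerivAt
  simp only [div_eq_mul_inv]
  rw [(hf.hasFDerivAt.fun_mul hinv).fderiv]
  simp only [add_apply, smul_apply, neg_smul, smul_neg, neg_apply, smul_eq_mul]
  field_simp
  ring

theorem fderiv_coord_sq_apply {n : ℕ} (i : Fin n) (q w : Fin n → ℝ) :
    fderiv ℝ (fun y : Fin n → ℝ => y i ^ 2) q w = 2 * q i * w i := by
  rw [((hasFDerivAt_apply i q).pow 2).fderiv]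
  simp

theorem differentiableAt_fderiv_apply {E : Type*} [NormedAddCommGroup E] [NormedSpace ℝ E]
    {v : E → ℝ} (hv : ContDiff ℝ 2 v) {X : E → E} {q : E} (hX : DifferentiableAt ℝ X q) :
    DifferentiableAt ℝ (fun y => fderiv ℝ v y (X y)) q :=
  ((hv.fderiv_right (m := 1) (by norm_num)).differentiable (by norm_num) q).clm_apply hX

def futureCone : Set (Fin 4 → ℝ) := {q | √(∑ a : Fin 3, q a.succ ^ 2) < q 0}

def dsField (q : Fin 4 → ℝ) : Fin 4 → ℝ := (sfun q / q 0) • Pi.single 0 1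

def daField (a : Fin 3) (q : Fin 4 → ℝ) : Fin 4 → ℝ :=
  (q a.succ / q 0) • Pi.single 0 1 + Pi.single a.succ 1

@[simp]
theorem dsField_apply_zero (q : Fin 4 → ℝ) : dsField q 0 = sfun q / q 0 := by
  simp [dsField]

@[simp]
theorem dsField_apply_succ (q : Fin 4 → ℝ) (b : Fin 3) : dsField q b.succ = 0 := by
  simp [dsField]

@[simp]
theorem daField_apply_zero (a : Fin 3) (q : Fin 4 → ℝ) : daField a q 0 = q a.succ / q 0 := by
  simp [daField]

@[simp]
theorem daField_apply_succ (a b : Fin 3) (q : Fin 4 → ℝ) :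
    daField a q b.succ = (Pi.single a 1 : Fin 3 → ℝ) b := by
  simp [daField, Pi.single_apply]

theorem isOpen_futureCone : IsOpen futureCone :=
  isOpen_lt (by fun_prop) (continuous_apply 0)

theorem Ds_eq_fderiv (f : (Fin 4 → ℝ) → ℝ) (q : Fin 4 → ℝ) :
    Ds f q = fderiv ℝ f q (dsField q) := by
  simp [Ds, dsField, pd]

theorem Da_eq_fderiv (a : Fin 3) (f : (Fin 4 → ℝ) → ℝ) (q : Fin 4 → ℝ) :
    Da a f q = fderiv ℝ f q (daField a q) := by
  simp [Da, daField, pd]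

section Cone

variable {q : Fin 4 → ℝ} (hq : q ∈ futureCone)
include hq

theorem time_pos_of_mem_futureCone : 0 < q 0 :=
  (Real.sqrt_nonneg _).trans_lt hq

theorem radicand_pos_of_mem_futureCone : 0 < q 0 ^ 2 - ∑ a : Fin 3, q a.succ ^ 2 :=
  sub_pos.2 ((Real.sqrt_lt' (time_pos_of_mem_futureCone hq)).1 hq)

theorem sfun_pos_of_mem_futureCone : 0 < sfun q :=
  Real.sqrt_pos.2 (radicand_pos_of_mem_futureCone hq)

theorem sfun_sq_of_mem_futureCone : sfun q ^ 2 = q 0 ^ 2 - ∑ a : Fin 3, q a.succ ^ 2 :=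
  Real.sq_sqrt (radicand_pos_of_mem_futureCone hq).le

theorem differentiableAt_sfun : DifferentiableAt ℝ sfun q :=
  DifferentiableAt.sqrt (by fun_prop) (radicand_pos_of_mem_futureCone hq).ne'

theorem fderiv_sfun_apply (w : Fin 4 → ℝ) :
    fderiv ℝ sfun q w = (q 0 * w 0 - ∑ a : Fin 3, q a.succ * w a.succ) / sfun q := by
  have hR : DifferentiableAt ℝ (fun y : Fin 4 → ℝ => y 0 ^ 2 - ∑ a : Fin 3, y a.succ ^ 2) q := by
    fun_prop
  rw [show sfun = fun y : Fin 4 → ℝ => √(y 0 ^ 2 - ∑ a : Fin 3, y a.succ ^ 2) from rfl,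
    (hR.hasFDerivAt.sqrt (radicand_pos_of_mem_futureCone hq).ne').fderiv, smul_apply,
    fderiv_fun_sub (by fun_prop) (by fun_prop), fderiv_fun_sum (fun _ _ => by fun_prop)]
  simp only [sub_apply, sum_apply, fderiv_coord_sq_apply, smul_eq_mul, mul_assoc,
    ← Finset.mul_sum]
  field_simp

theorem fderiv_sfun_self : fderiv ℝ sfun q q = sfun q := by
  rw [fderiv_sfun_apply hq, div_eq_iff (sfun_pos_of_mem_futureCone hq).ne', ← sq (sfun q),
    sfun_sq_of_mem_futureCone hq]
  simp only [sq]

theorem fderiv_sfun_daField (a : Fin 3) : fderiv ℝ sfun q (daField a q) = 0 := by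
  rw [fderiv_sfun_apply hq, div_eq_zero_iff]
  left
  simp only [daField_apply_zero, daField_apply_succ, Pi.single_apply, mul_ite, mul_one, mul_zero,
    Finset.sum_ite_eq', Finset.mem_univ, if_true]
  field_simp [(time_pos_of_mem_futureCone hq).ne']
  ring

theorem dsField_add_sum_smul_daField :
    dsField q + ∑ a : Fin 3, (q a.succ / sfun q) • daField a q = (sfun q)⁻¹ • q := by
  have ht := (time_pos_of_mem_futureCone hq).ne'
  have hs := (sfun_pos_of_mem_futureCone hq).ne'
  ext i
  cases i using Fin.cases with
  | zero =>
    simp only [Pi.add_apply, Finset.sum_apply, Pi.smul_apply, smul_eq_mul, dsField_apply_zero,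
      daField_apply_zero, div_mul_div_comm, ← Finset.sum_div, ← sq]
    field_simp
    linear_combination sfun_sq_of_mem_futureCone hq
  | succ b =>
    simp [Pi.single_apply, div_eq_inv_mul]

theorem Lop_eq_fderiv (f : (Fin 4 → ℝ) → ℝ) : Lop f q = (sfun q)⁻¹ * fderiv ℝ f q q := by
  simp only [Lop, Ds_eq_fderiv, Da_eq_fderiv, ← smul_eq_mul, ← map_smul, ← map_sum, ← map_add,
    dsField_add_sum_smul_daField hq]

theorem differentiableAt_dsField : DifferentiableAt ℝ dsField q := by
  have := differentiableAt_sfun hq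
  have := (time_pos_of_mem_futureCone hq).ne'
  unfold dsField
  fun_prop (disch := assumption)

theorem differentiableAt_daField (a : Fin 3) : DifferentiableAt ℝ (daField a) q := by
  have := (time_pos_of_mem_futureCone hq).ne'
  unfold daField
  fun_prop (disch := assumption)

theorem lieBracket_dsField_daField (a : Fin 3) : lieBracket ℝ dsField (daField a) q = 0 := by
  have ht := (time_pos_of_mem_futureCone hq).ne'
  have hsd := differentiableAt_sfun hq
  have hds (w : Fin 4 → ℝ) : fderiv ℝ dsField q w =
      ((fderiv ℝ sfun q w * q 0 - sfun q * w 0) / q 0 ^ 2) • Pi.single 0 1 := by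
    have hc : DifferentiableAt ℝ (fun y : Fin 4 → ℝ => sfun y / y 0) q := by
      fun_prop (disch := assumption)
    change fderiv ℝ (fun y => (sfun y / y 0) • (Pi.single 0 1 : Fin 4 → ℝ)) q w = _
    rw [fderiv_smul_const hc, ContinuousLinearMap.smulRight_apply,
      fderiv_div_apply hsd (differentiableAt_apply 0 q) ht, (hasFDerivAt_apply 0 q).fderiv]
    rfl
  have hda (w : Fin 4 → ℝ) : fderiv ℝ (daField a) q w =
      ((w a.succ * q 0 - q a.succ * w 0) / q 0 ^ 2) • Pi.single 0 1 := by
    have hc : DifferentiableAt ℝ (fun y : Fin 4 → ℝ => y a.succ / y 0) q := by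
      fun_prop (disch := assumption)
    change fderiv ℝ (fun y => (y a.succ / y 0) • (Pi.single 0 1 : Fin 4 → ℝ) +
      Pi.single a.succ 1) q w = _
    rw [fderiv_add_const, fderiv_smul_const hc, ContinuousLinearMap.smulRight_apply,
      fderiv_div_apply (differentiableAt_apply _ q) (differentiableAt_apply 0 q) ht,
      (hasFDerivAt_apply 0 q).fderiv, (hasFDerivAt_apply a.succ q).fderiv]
    rfl
  rw [lieBracket, hds, hda, fderiv_sfun_daField hq, ← sub_smul, smul_eq_zero]
  left
  simp only [dsField_apply_zero, dsField_apply_succ, daField_apply_zero]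
  ring

end Cone

section Euler

variable {q : Fin 4 → ℝ} (hq : q ∈ futureCone) {f g : (Fin 4 → ℝ) → ℝ}
include hq

theorem Lop_congr (h : f =ᶠ[𝓝 q] g) : Lop f q = Lop g q := by
  rw [Lop_eq_fderiv hq, Lop_eq_fderiv hq, h.fderiv_eq]

theorem Lop_add (hf : DifferentiableAt ℝ f q) (hg : DifferentiableAt ℝ g q) :
    Lop (fun y => f y + g y) q = Lop f q + Lop g q := by
  simp only [Lop_eq_fderiv hq, fderiv_fun_add hf hg, add_apply, mul_add]

theorem Lop_sum {ι : Type*} (s : Finset ι) {F : ι → (Fin 4 → ℝ) → ℝ}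
    (hF : ∀ i ∈ s, DifferentiableAt ℝ (F i) q) :
    Lop (fun y => ∑ i ∈ s, F i y) q = ∑ i ∈ s, Lop (F i) q := by
  simp only [Lop_eq_fderiv hq, fderiv_fun_sum hF, sum_apply, Finset.mul_sum]

theorem Lop_mul (hf : DifferentiableAt ℝ f q) (hg : DifferentiableAt ℝ g q) :
    Lop (fun y => f y * g y) q = f q * Lop g q + g q * Lop f q := by
  simp only [Lop_eq_fderiv hq, fderiv_fun_mul hf hg, add_apply, smul_apply, smul_eq_mul]
  ring

theorem Lop_const_mul (c : ℝ) (hf : DifferentiableAt ℝ f q) :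
    Lop (fun y => c * f y) q = c * Lop f q := by
  simp only [Lop_eq_fderiv hq, fderiv_const_mul hf, smul_apply, smul_eq_mul]
  ring

theorem Lop_sfun_rpow (k : ℝ) : Lop (fun y => sfun y ^ k) q = k * sfun q ^ (k - 1) := by
  have hs := sfun_pos_of_mem_futureCone hq
  rw [Lop_eq_fderiv hq, ((differentiableAt_sfun hq).hasFDerivAt.rpow_const (p := k)
    (Or.inl hs.ne')).fderiv, smul_apply, fderiv_sfun_self hq, smul_eq_mul]
  field_simp

theorem Lop_coord_div_sfun (a : Fin 3) : Lop (fun y => y a.succ / sfun y) q = 0 := by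
  rw [Lop_eq_fderiv hq, fderiv_div_apply (differentiableAt_apply _ q) (differentiableAt_sfun hq)
    (sfun_pos_of_mem_futureCone hq).ne', fderiv_sfun_self hq, (hasFDerivAt_apply a.succ q).fderiv]
  simp

-- The factor `k / s` is written as `k * s ^ (-1)` so that the lemma applies again to that term.
theorem Lop_sfun_rpow_mul (hf : DifferentiableAt ℝ f q) (k : ℝ) :
    Lop (fun y => sfun y ^ k * f y) q =
      sfun q ^ k * (Lop f q + k * (sfun q ^ (-1 : ℝ) * f q)) := by
  have hs := sfun_pos_of_mem_futureCone hq
  rw [Lop_mul hq ((differentiableAt_sfun hq).rpow_const (Or.inl hs.ne')) hf, Lop_sfun_rpow hq,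
    Real.rpow_sub_one hs.ne', Real.rpow_neg_one]
  field_simp

end Euler

section Frame

variable {v : (Fin 4 → ℝ) → ℝ} (hv : ContDiff ℝ 2 v) {q : Fin 4 → ℝ} (hq : q ∈ futureCone)
include hv hq

theorem differentiableAt_Ds : DifferentiableAt ℝ (Ds v) q := by
  simpa only [← funext (Ds_eq_fderiv v)] using
    differentiableAt_fderiv_apply hv (differentiableAt_dsField hq)

theorem differentiableAt_Da (a : Fin 3) : DifferentiableAt ℝ (Da a v) q := by
  simpa only [← funext (Da_eq_fderiv a v)] using
    differentiableAt_fderiv_apply hv (differentiableAt_daField hq a)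

theorem differentiableAt_Lop : DifferentiableAt ℝ (Lop v) q := by
  have := differentiableAt_sfun hq
  have := (sfun_pos_of_mem_futureCone hq).ne'
  have := differentiableAt_Ds hv hq
  have := differentiableAt_Da hv hq
  unfold Lop
  fun_prop (disch := assumption)

theorem Da_Ds_comm (a : Fin 3) : Da a (Ds v) q = Ds (Da a v) q := by
  have h := fderiv_apply_lieBracket (hv.contDiffAt (x := q)) (by simp)
    (differentiableAt_daField hq a) (differentiableAt_dsField hq)
  rw [lieBracket_dsField_daField hq, map_zero, ← funext (Ds_eq_fderiv v),
    ← funext (Da_eq_fderiv a v), ← Ds_eq_fderiv, ← Da_eq_fderiv] at h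
  exact (sub_eq_zero.1 h.symm).symm

theorem Lop_Lop : Lop (Lop v) q = Ds (Ds v) q + ∑ a : Fin 3, 2 * q a.succ / sfun q * Ds (Da a v) q
    + ∑ a : Fin 3, ∑ b : Fin 3, q a.succ * q b.succ / sfun q ^ 2 * Da a (Da b v) q := by
  have := (sfun_pos_of_mem_futureCone hq).ne'
  have := differentiableAt_sfun hq
  have hcoef (a : Fin 3) : DifferentiableAt ℝ (fun y => y a.succ / sfun y) q := by
    fun_prop (disch := assumption)
  have hterm (a : Fin 3) : DifferentiableAt ℝ (fun y => y a.succ / sfun y * Da a v y) q :=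
    (hcoef a).mul (differentiableAt_Da hv hq a)
  calc Lop (Lop v) q
      = Lop (Ds v) q + ∑ a : Fin 3, q a.succ / sfun q * Lop (Da a v) q := by
        change Lop (fun y => Ds v y + ∑ a : Fin 3, y a.succ / sfun y * Da a v y) q = _
        rw [Lop_add hq (differentiableAt_Ds hv hq) (by fun_prop),
          Lop_sum hq _ (fun a _ => hterm a)]
        simp only [Lop_mul hq (hcoef _) (differentiableAt_Da hv hq _), Lop_coord_div_sfun hq,
          mul_zero, add_zero]
    _ = _ := by
        simp only [Lop, Da_Ds_comm hv hq, Fin.sum_univ_three]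
        ring

theorem Lop_Lop_sfun_rpow_mul (k : ℝ) :
    Lop (Lop (fun y => sfun y ^ k * v y)) q = sfun q ^ k *
      (Lop (Lop v) q + 2 * k / sfun q * Lop v q + k * (k - 1) / sfun q ^ 2 * v q) := by
  have hs := sfun_pos_of_mem_futureCone hq
  have hv1 : Differentiable ℝ v := hv.differentiable (by norm_num)
  have hinv : DifferentiableAt ℝ (fun y => sfun y ^ (-1 : ℝ) * v y) q :=
    ((differentiableAt_sfun hq).rpow_const (Or.inl hs.ne')).mul (hv1 q)
  have hLop : Lop (fun y => sfun y ^ k * v y) =ᶠ[𝓝 q]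
      fun y => sfun y ^ k * (Lop v y + k * (sfun y ^ (-1 : ℝ) * v y)) :=
    Filter.eventually_of_mem (isOpen_futureCone.mem_nhds hq)
      fun y hy => Lop_sfun_rpow_mul hy (hv1 y) k
  rw [Lop_congr hq hLop,
    Lop_sfun_rpow_mul hq ((differentiableAt_Lop hv hq).fun_add (hinv.const_mul k)),
    Lop_add hq (differentiableAt_Lop hv hq) (hinv.const_mul k), Lop_const_mul hq k hinv,
    Lop_sfun_rpow_mul hq (hv1 q), Real.rpow_neg_one]
  field_simp
  ring

end Frame

/-- pointwise identity in the cone `{r < t}`: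
`∂̄_s∂̄_s v + (2x^a/s)∂̄_s∂̄_a v + (3/s)∂̄_s v
  = s^{-3/2} L²(s^{3/2}v) − (x^ax^b/s²)∂̄_a∂̄_b v − (3x^a/s²)∂̄_a v − (3/(4s²))v`. -/
theorem oscillator_reduction_identity
    (v : (Fin 4 → ℝ) → ℝ) (hv : ContDiff ℝ 2 v)
    (p : Fin 4 → ℝ)
    (hp : Real.sqrt (∑ a : Fin 3, (p a.succ) ^ 2) < p 0) :
    Ds (Ds v) p + (∑ a : Fin 3, (2 * p a.succ / sfun p) * Ds (Da a v) p) +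
        (3 / sfun p) * Ds v p =
      (sfun p) ^ (-(3 : ℝ) / 2) *
          Lop (Lop (fun q => (sfun q) ^ ((3 : ℝ) / 2) * v q)) p -
        (∑ a : Fin 3, ∑ b : Fin 3,
          (p a.succ * p b.succ / (sfun p) ^ 2) * Da a (Da b v) p) -
        (∑ a : Fin 3, (3 * p a.succ / (sfun p) ^ 2) * Da a v p) -
        (3 / (4 * (sfun p) ^ 2)) * v p := by
  have hp' : p ∈ futureCone := hp
  have hs := sfun_pos_of_mem_futureCone hp'
  rw [Lop_Lop_sfun_rpow_mul hv hp', neg_div, Real.rpow_neg hs.le,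
    inv_mul_cancel_left₀ (Real.rpow_pos_of_pos hs _).ne', Lop_Lop hv hp', Lop]
  simp only [Fin.sum_univ_three]
  field_simp
  ring
end
end

section
/- Let J = ∂_t + (2t x^a/(t²+r²)) ∂_a be the vector field on {0 < r < t} ⊂ ℝ^{1+3}, and let γ(·; t₀, x₀) be its integral curve through (t₀,x₀) with r₀ = |x₀| > 0 and c₀ = (t₀² − r₀²)/r₀ > 0. Then the integral curve is given explicitly by γ⁰(τ) = τ, γ^a(τ) = (x₀^a/r₀)(√(τ² + c₀²/4) − c₀/2); equivalently, the quantity (t² − r²)/r is constant equal to c₀ along γ. -/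
/-!
Along an integral curve of `J` the direction `x/|x|` is constant, so only the radius `r`
evolves, by `r' = 2τr/(τ² + r²)`. With `q = √(τ² + c²/4)`, the radius `r = q − c/2`
satisfies `τ² − r² = c r` and `τ² + r² = 2 q r`; the second identity turns `r' = τ/q` into
exactly this equation, and the first is the conservation of `(τ² − r²)/r`, which fixes
`c = c₀` from the initial point.
-/

noncomputable section

/-- The positive root `r` of `r² + c r − τ² = 0`. -/
def integralCurveRadius (c τ : ℝ) : ℝ := √(τ ^ 2 + c ^ 2 / 4) - c / 2

lemma sq_sub_integralCurveRadius_sq (c τ : ℝ) :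
    τ ^ 2 - integralCurveRadius c τ ^ 2 = c * integralCurveRadius c τ := by
  unfold integralCurveRadius
  linear_combination -Real.sq_sqrt (by positivity : 0 ≤ τ ^ 2 + c ^ 2 / 4)

lemma sq_add_integralCurveRadius_sq (c τ : ℝ) :
    τ ^ 2 + integralCurveRadius c τ ^ 2 =
      2 * √(τ ^ 2 + c ^ 2 / 4) * integralCurveRadius c τ := by
  unfold integralCurveRadius
  linear_combination -Real.sq_sqrt (by positivity : 0 ≤ τ ^ 2 + c ^ 2 / 4)

lemma integralCurveRadius_pos (c : ℝ) {τ : ℝ} (hτ : τ ≠ 0) : 0 < integralCurveRadius c τ := by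
  have hsq : (c / 2) ^ 2 < √(τ ^ 2 + c ^ 2 / 4) ^ 2 := by
    rw [Real.sq_sqrt (by positivity)]
    linarith [pow_pos (abs_pos.mpr hτ) 2, sq_abs τ]
  have habs := abs_lt_of_sq_lt_sq hsq (Real.sqrt_nonneg _)
  unfold integralCurveRadius
  linarith [le_abs_self (c / 2)]

lemma integralCurveRadius_self {t r : ℝ} (hr : 0 < r) :
    integralCurveRadius ((t ^ 2 - r ^ 2) / r) t = r := by
  set c := (t ^ 2 - r ^ 2) / r with hc
  have hcr : c * r = t ^ 2 - r ^ 2 := div_mul_cancel₀ _ hr.ne'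
  have hroot : r + c / 2 = (t ^ 2 + r ^ 2) / (2 * r) := by
    rw [hc]; field_simp; ring
  have hsqrt : √(t ^ 2 + c ^ 2 / 4) = r + c / 2 := by
    rw [Real.sqrt_eq_iff_mul_self_eq (by positivity) (by rw [hroot]; positivity)]
    linear_combination -hcr
  rw [integralCurveRadius, hsqrt]
  ring

lemma integralCurveRadius_invariant (c : ℝ) {τ : ℝ} (hτ : τ ≠ 0) :
    (τ ^ 2 - integralCurveRadius c τ ^ 2) / integralCurveRadius c τ = c := by
  rw [sq_sub_integralCurveRadius_sq,
    mul_div_cancel_right₀ _ (integralCurveRadius_pos c hτ).ne']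

lemma hasDerivAt_integralCurveRadius (c : ℝ) {τ : ℝ} (hτ : τ ≠ 0) :
    HasDerivAt (integralCurveRadius c)
      (2 * τ / (τ ^ 2 + integralCurveRadius c τ ^ 2) * integralCurveRadius c τ) τ := by
  have hr := integralCurveRadius_pos c hτ
  have hsqrt : HasDerivAt (fun τ => √(τ ^ 2 + c ^ 2 / 4)) (τ / √(τ ^ 2 + c ^ 2 / 4)) τ := by
    convert ((hasDerivAt_pow 2 τ).add_const (c ^ 2 / 4)).sqrt (by positivity) using 1
    field_simp
    ring
  refine (hsqrt.sub_const (c / 2)).congr_deriv ?_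
  rw [sq_add_integralCurveRadius_sq]
  field_simp

theorem J_integral_curve_explicit_general
    (t₀ : ℝ) (x₀ : EuclideanSpace ℝ (Fin 3))
    (h0 : 0 < ‖x₀‖)
    (c₀ : ℝ) (hc : c₀ = (t₀ ^ 2 - ‖x₀‖ ^ 2) / ‖x₀‖)
    (γ : ℝ → EuclideanSpace ℝ (Fin 3))
    (hγ : γ = fun τ =>
      ((Real.sqrt (τ ^ 2 + c₀ ^ 2 / 4) - c₀ / 2) / ‖x₀‖) • x₀) :
    γ t₀ = x₀ ∧
      ∀ τ : ℝ, 0 < τ →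
        HasDerivAt γ ((2 * τ / (τ ^ 2 + ‖γ τ‖ ^ 2)) • γ τ) τ ∧
        (τ ^ 2 - ‖γ τ‖ ^ 2) / ‖γ τ‖ = c₀ := by
  change γ = fun τ => (integralCurveRadius c₀ τ / ‖x₀‖) • x₀ at hγ
  have hnorm : ∀ τ ≠ 0, ‖γ τ‖ = integralCurveRadius c₀ τ := fun τ hτ => by
    have hr := integralCurveRadius_pos c₀ hτ
    rw [hγ, norm_smul, Real.norm_of_nonneg (by positivity), div_mul_cancel₀ _ h0.ne']
  refine ⟨?_, fun τ hτ => ⟨?_, ?_⟩⟩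
  · rw [hγ]
    dsimp only
    rw [hc, integralCurveRadius_self h0, div_self h0.ne', one_smul]
  · rw [hnorm τ hτ.ne', hγ]
    refine (((hasDerivAt_integralCurveRadius c₀ hτ.ne').div_const ‖x₀‖).smul_const
      x₀).congr_deriv ?_
    simp only [smul_smul, mul_div_assoc]
  · rw [hnorm τ hτ.ne']
    exact integralCurveRadius_invariant c₀ hτ.ne'

/-- explicit integral curves of `J = ∂_t + (2tx^a/(t²+r²))∂_a`
in `{0 < r < t} ⊂ ℝ^{1+3}`: the curve
`γ(τ) = ((√(τ²+c₀²/4) − c₀/2)/r₀) • x₀` passes through `(t₀,x₀)`, satisfies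
`γ' = (2τ/(τ²+|γ|²)) γ`, and `(τ² − |γ|²)/|γ| ≡ c₀`. -/
theorem J_integral_curve_explicit
    (t₀ : ℝ) (x₀ : EuclideanSpace ℝ (Fin 3))
    (h0 : 0 < ‖x₀‖) (ht : ‖x₀‖ < t₀)
    (c₀ : ℝ) (hc : c₀ = (t₀ ^ 2 - ‖x₀‖ ^ 2) / ‖x₀‖)
    (γ : ℝ → EuclideanSpace ℝ (Fin 3))
    (hγ : γ = fun τ =>
      ((Real.sqrt (τ ^ 2 + c₀ ^ 2 / 4) - c₀ / 2) / ‖x₀‖) • x₀) :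
    γ t₀ = x₀ ∧
      ∀ τ : ℝ, 0 < τ →
        HasDerivAt γ ((2 * τ / (τ ^ 2 + ‖γ τ‖ ^ 2)) • γ τ) τ ∧
        (τ ^ 2 - ‖γ τ‖ ^ 2) / ‖γ τ‖ = c₀ :=
  J_integral_curve_explicit_general t₀ x₀ h0 c₀ hc γ hγ
end
end

section
/- Along the integral curve γ(·;t,x) of J = ∂_t + (2τ x^a/(τ²+r²))∂_a with conserved quantity c₀ = (t²−r²)/r, the coefficient function P(τ, r) := (2/τ)·(τ²−r²)/(τ²+r²) evaluated along γ satisfies 0 ≤ P_{t,x}(τ) ≤ C c₀ (1+τ)^{-2} for all τ ≥ t ≥ 1, for a universal constant C; consequently ∫_t^∞ P_{t,x}(η) dη ≤ C c₀ t^{-1} < ∞, and exp(∫_t^T P_{t,x}(η)dη) ≤ exp(C c₀ (t^{-1} − T^{-1})) for T ≥ t. -/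
open Set MeasureTheory Filter Topology

/-!
Along the curve `τ² − r² = c₀ r`, so `P(τ, r) = (c₀ / τ) · 2rτ / (τ² + r²) ≤ c₀ / τ²`
by AM–GM. All three bounds then follow by comparison with `c₀ / τ²`, whose primitive
is `−c₀ / τ`.
-/

noncomputable def coeffP (τ r : ℝ) : ℝ := (2 / τ) * (τ ^ 2 - r ^ 2) / (τ ^ 2 + r ^ 2)

lemma coeffP_nonneg {τ r : ℝ} (hτ : 0 < τ) (hr : r ^ 2 ≤ τ ^ 2) : 0 ≤ coeffP τ r := by
  unfold coeffP
  have : 0 ≤ τ ^ 2 - r ^ 2 := sub_nonneg.mpr hr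
  positivity

lemma coeffP_le_of_sub_eq {τ r c : ℝ} (hτ : 0 < τ) (hc : 0 ≤ c)
    (h : τ ^ 2 - r ^ 2 = c * r) : coeffP τ r ≤ c / τ ^ 2 := by
  have hden : 0 < τ ^ 2 + r ^ 2 := by positivity
  unfold coeffP
  rw [h, div_le_div_iff₀ hden (by positivity), div_mul_eq_mul_div, div_mul_eq_mul_div,
    div_le_iff₀ hτ]
  nlinarith [mul_nonneg hc (sq_nonneg (τ - r))]

lemma ContinuousOn.coeffP {s : Set ℝ} {r : ℝ → ℝ} (hr : ContinuousOn r s)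
    (hs : ∀ x ∈ s, x ≠ 0) : ContinuousOn (fun x => coeffP x (r x)) s := by
  unfold _root_.coeffP
  refine ((continuousOn_const.div continuousOn_id hs).mul
    ((continuousOn_id.pow 2).sub (hr.pow 2))).div ((continuousOn_id.pow 2).add (hr.pow 2)) ?_
  intro x hx
  have := hs x hx
  positivity

lemma div_sq_le_four_mul_div_one_add_sq {c τ : ℝ} (hc : 0 ≤ c) (hτ : 1 ≤ τ) :
    c / τ ^ 2 ≤ 4 * c / (1 + τ) ^ 2 := by
  rw [div_le_div_iff₀ (by positivity) (by positivity)]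
  nlinarith [mul_nonneg hc (mul_nonneg (by linarith : (0 : ℝ) ≤ 3 * τ + 1)
    (by linarith : (0 : ℝ) ≤ τ - 1))]

lemma hasDerivAt_neg_const_div {c x : ℝ} (hx : x ≠ 0) :
    HasDerivAt (fun y => -c / y) (c / x ^ 2) x := by
  simpa [div_eq_mul_inv] using (hasDerivAt_inv hx).const_mul (-c)

section InverseSquare

variable {c t : ℝ}

lemma tendsto_neg_const_div_atTop : Tendsto (fun y : ℝ => -c / y) atTop (𝓝 0) :=
  tendsto_const_nhds.div_atTop tendsto_id

lemma integrableOn_Ioi_const_div_sq (hc : 0 ≤ c) (ht : 0 < t) :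
    IntegrableOn (fun x => c / x ^ 2) (Ioi t) :=
  integrableOn_Ioi_deriv_of_nonneg' (fun x hx => hasDerivAt_neg_const_div (ht.trans_le hx).ne')
    (fun _ _ => by positivity) tendsto_neg_const_div_atTop

lemma integral_Ioi_const_div_sq (hc : 0 ≤ c) (ht : 0 < t) :
    ∫ x in Ioi t, c / x ^ 2 = c / t := by
  rw [integral_Ioi_of_hasDerivAt_of_nonneg'
    (fun x hx => hasDerivAt_neg_const_div (ht.trans_le hx).ne') (fun _ _ => by positivity)
    tendsto_neg_const_div_atTop]
  ring

lemma integral_const_div_sq {T : ℝ} (ht : 0 < t) (hT : t ≤ T) :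
    ∫ x in t..T, c / x ^ 2 = c * (t⁻¹ - T⁻¹) := by
  have hpos : ∀ x ∈ uIcc t T, x ≠ 0 := fun x hx =>
    (ht.trans_le (uIcc_of_le hT ▸ hx).1).ne'
  rw [intervalIntegral.integral_eq_sub_of_hasDerivAt
    (fun x hx => hasDerivAt_neg_const_div (hpos x hx))
    (continuousOn_const.div (continuousOn_id.pow 2) fun x hx => pow_ne_zero 2 (hpos x hx)
      ).intervalIntegrable]
  ring

variable {f : ℝ → ℝ}

lemma integrableOn_Ici_of_le_const_div_sq (hc : 0 ≤ c) (ht : 0 < t)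
    (hf : AEStronglyMeasurable f (volume.restrict (Ici t)))
    (hbound : ∀ x ∈ Ici t, 0 ≤ f x ∧ f x ≤ c / x ^ 2) : IntegrableOn f (Ici t) := by
  refine Integrable.mono' (Iff.mpr integrableOn_Ici_iff_integrableOn_Ioi
    (integrableOn_Ioi_const_div_sq hc ht)) hf ?_
  filter_upwards [ae_restrict_mem measurableSet_Ici] with x hx
  rw [Real.norm_of_nonneg (hbound x hx).1]
  exact (hbound x hx).2

lemma setIntegral_Ici_le_of_le_const_div_sq (hc : 0 ≤ c) (ht : 0 < t)
    (hf : IntegrableOn f (Ici t)) (hbound : ∀ x ∈ Ici t, f x ≤ c / x ^ 2) :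
    ∫ x in Ici t, f x ≤ c / t := by
  rw [integral_Ici_eq_integral_Ioi, ← integral_Ioi_const_div_sq hc ht]
  exact setIntegral_mono_on (hf.mono_set Ioi_subset_Ici_self)
    (integrableOn_Ioi_const_div_sq hc ht) measurableSet_Ioi
    fun x hx => hbound x (Ioi_subset_Ici_self hx)

lemma intervalIntegral_le_of_le_const_div_sq {T : ℝ} (ht : 0 < t) (hT : t ≤ T)
    (hf : IntervalIntegrable f volume t T) (hbound : ∀ x ∈ Icc t T, f x ≤ c / x ^ 2) :
    ∫ x in t..T, f x ≤ c * (t⁻¹ - T⁻¹) := by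
  rw [← integral_const_div_sq ht hT]
  refine intervalIntegral.integral_mono_on hT hf ?_ hbound
  exact (continuousOn_const.div (continuousOn_id.pow 2) fun x hx =>
    pow_ne_zero 2 (ht.trans_le hx.1).ne').intervalIntegrable_of_Icc hT

end InverseSquare

/-- along an integral curve of `J` with conserved quantity
`c₀ = (τ²−r²)/r`, the coefficient `P(τ,r) = (2/τ)(τ²−r²)/(τ²+r²)` satisfies
`0 ≤ P ≤ C c₀ (1+τ)⁻²`, hence `∫_t^∞ P ≤ C c₀/t` and
`exp(∫_t^T P) ≤ exp(C c₀ (t⁻¹ − T⁻¹))`, for a universal constant `C`. -/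
theorem P_coefficient_bounds :
    ∃ C : ℝ, 0 < C ∧
      ∀ (c₀ t : ℝ) (rr : ℝ → ℝ), 0 < c₀ → 1 ≤ t →
        ContinuousOn rr (Ici t) →
        (∀ τ ∈ Ici t, 0 < rr τ ∧ rr τ < τ ∧ (τ ^ 2 - rr τ ^ 2) / rr τ = c₀) →
        (∀ τ ∈ Ici t,
            0 ≤ (2 / τ) * (τ ^ 2 - rr τ ^ 2) / (τ ^ 2 + rr τ ^ 2) ∧
            (2 / τ) * (τ ^ 2 - rr τ ^ 2) / (τ ^ 2 + rr τ ^ 2) ≤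
              C * c₀ / (1 + τ) ^ 2) ∧
        (∫ η in Ici t, (2 / η) * (η ^ 2 - rr η ^ 2) / (η ^ 2 + rr η ^ 2)) ≤
          C * c₀ / t ∧
        ∀ T, t ≤ T →
          Real.exp (∫ η in t..T,
              (2 / η) * (η ^ 2 - rr η ^ 2) / (η ^ 2 + rr η ^ 2)) ≤
            Real.exp (C * c₀ * (t⁻¹ - T⁻¹)) := by
  refine ⟨4, by norm_num, fun c₀ t rr hc₀ ht hcont hrr => ?_⟩
  have ht0 : 0 < t := one_pos.trans_le ht
  have hbound : ∀ τ ∈ Ici t, 0 ≤ coeffP τ (rr τ) ∧ coeffP τ (rr τ) ≤ c₀ / τ ^ 2 := by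
    intro τ hτ
    obtain ⟨hr, hrτ, hconserved⟩ := hrr τ hτ
    have hτ0 : 0 < τ := ht0.trans_le hτ
    exact ⟨coeffP_nonneg hτ0 (pow_le_pow_left₀ hr.le hrτ.le 2),
      coeffP_le_of_sub_eq hτ0 hc₀.le ((div_eq_iff hr.ne').mp hconserved)⟩
  have hint : IntegrableOn (fun η => coeffP η (rr η)) (Ici t) :=
    integrableOn_Ici_of_le_const_div_sq hc₀.le ht0
      ((hcont.coeffP fun x hx => (ht0.trans_le hx).ne').aestronglyMeasurable
        measurableSet_Ici)
      hbound
  refine ⟨fun τ hτ => ⟨(hbound τ hτ).1, (hbound τ hτ).2.trans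
    (div_sq_le_four_mul_div_one_add_sq hc₀.le (ht.trans hτ))⟩, ?_, fun T hT => ?_⟩
  · calc ∫ η in Ici t, coeffP η (rr η)
        ≤ c₀ / t :=
          setIntegral_Ici_le_of_le_const_div_sq hc₀.le ht0 hint fun τ hτ => (hbound τ hτ).2
      _ ≤ 4 * c₀ / t := by gcongr; linarith
  · rw [Real.exp_le_exp]
    calc ∫ η in t..T, coeffP η (rr η)
        ≤ c₀ * (t⁻¹ - T⁻¹) :=
          intervalIntegral_le_of_le_const_div_sq ht0 hT
            ((intervalIntegrable_iff_integrableOn_Icc_of_le hT).mpr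
              (hint.mono_set Icc_subset_Ici_self))
            fun τ hτ => (hbound τ hτ.1).2
      _ ≤ 4 * c₀ * (t⁻¹ - T⁻¹) := by
          have : T⁻¹ ≤ t⁻¹ := inv_anti₀ ht0 hT
          gcongr
          linarith
end
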